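/- arXiv:math-ph/9908008 — 3 statements merged into one kernel-verified Lean document; each statement's English description precedes it below -/
import Mathlib

section
/- Let f be a Schwartz function on ℝ³. Then there exist C > 0, R₀ > 0, T₀ > 0 such that for all x ∈ ℝ³ with |x| ≥ R₀ and all t ≥ T₀, and every integer 0 ≤ q ≤ 1, (|x|/t)^q · |∫_{ℝ³} e^{i|x||y|/(2t)} f(y)/|y| d³y| ≤ C. -/
open MeasureTheory

/-!
In polar coordinates `y = r • ω` the integral becomes
`∫_{S²} ∫_0^∞ e^{i l r} φ_ω(r) dr dσ(ω)` with `l = |x|/(2t)` and `φ_ω(r) = r f(r ω)`, the Jacobian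
`r²` absorbing the singularity `1/|y|`. Since `f` is Schwartz, `φ_ω` and `φ_ω'` are
`O((1 + r)⁻²)` uniformly in `ω`. The case `q = 0` is the triangle inequality. For `q = 1`,
integrating by parts in `r` against the primitive `e^{i l r}/(i l)` produces no boundary terms
(`φ_ω(0) = 0` and `φ_ω(∞) = 0`) and gains the factor `1/l` that compensates `|x|/t = 2 l`.
-/

open Measure Set Metric Filter Complex Topology
open scoped SchwartzMap

theorem norm_integral_Ioi_exp_mul_le {φ φ' : ℝ → ℂ} {l : ℝ} (hl : l ≠ 0)
    (hφ : ∀ r ∈ Ioi (0 : ℝ), HasDerivAt φ (φ' r) r) (hφ_zero : Tendsto φ (𝓝[>] 0) (𝓝 0))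
    (hφ_top : Tendsto φ atTop (𝓝 0)) (hφ_int : IntegrableOn φ (Ioi 0))
    (hφ'_int : IntegrableOn φ' (Ioi 0)) :
    ‖∫ r in Ioi (0 : ℝ), exp (I * l * r) * φ r‖ ≤ |l|⁻¹ * ∫ r in Ioi (0 : ℝ), ‖φ' r‖ := by
  have hIl : I * l ≠ 0 := mul_ne_zero I_ne_zero (ofReal_ne_zero.2 hl)
  set v : ℝ → ℂ := fun r => exp (I * l * r) / (I * l)
  have hv_cont : Continuous v := by fun_prop
  have hv_norm (r : ℝ) : ‖v r‖ = |l|⁻¹ := by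
    simp [v, norm_exp, Complex.norm_real]
  have hv (r : ℝ) : HasDerivAt v (exp (I * l * r)) r := by
    have := ((hasDerivAt_id (r : ℂ)).const_mul (I * l)).cexp.comp_ofReal.div_const (I * l)
    simpa [v, mul_div_cancel_right₀ _ hIl] using this
  have hφv_tendsto {L : Filter ℝ} (h : Tendsto φ L (𝓝 0)) : Tendsto (φ * v) L (𝓝 0) := by
    rw [tendsto_zero_iff_norm_tendsto_zero]
    simpa [norm_mul, hv_norm] using h.norm.mul_const |l|⁻¹
  have hφ'v_int : IntegrableOn (φ' * v) (Ioi 0) :=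
    hφ'_int.mul_bdd hv_cont.aestronglyMeasurable (.of_forall fun r => (hv_norm r).le)
  have hφe_int : IntegrableOn (φ * fun r : ℝ => exp (I * l * r)) (Ioi 0) :=
    hφ_int.mul_bdd (c := 1) (by fun_prop) (.of_forall fun r => by simp [norm_exp])
  have hibp := integral_Ioi_mul_deriv_eq_deriv_mul (fun r _ => hφ r ‹_›) (fun r _ => hv r)
    hφe_int hφ'v_int (hφv_tendsto hφ_zero) (hφv_tendsto hφ_top)
  calc ‖∫ r in Ioi (0 : ℝ), exp (I * l * r) * φ r‖
      = ‖∫ r in Ioi (0 : ℝ), φ' r * v r‖ := by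
        simp_rw [mul_comm (exp _), hibp, sub_self, zero_sub, norm_neg]
    _ ≤ ∫ r in Ioi (0 : ℝ), ‖φ' r‖ * |l|⁻¹ := by
        simpa [norm_mul, hv_norm] using norm_integral_le_integral_norm (fun r => φ' r * v r)
    _ = |l|⁻¹ * ∫ r in Ioi (0 : ℝ), ‖φ' r‖ := by rw [integral_mul_const, mul_comm]

section Polar

variable {E G : Type*} [NormedAddCommGroup E] [NormedSpace ℝ E] [MeasurableSpace E]
  [BorelSpace E] [FiniteDimensional ℝ E] [Nontrivial E] [NormedAddCommGroup G] [NormedSpace ℝ G]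
  (μ : Measure E) [μ.IsAddHaarMeasure]

theorem integral_volumeIoiPow (n : ℕ) (g : ℝ → G) :
    ∫ r : Ioi (0 : ℝ), g r ∂volumeIoiPow n = ∫ r in Ioi (0 : ℝ), r ^ n • g r := by
  simp only [volumeIoiPow, ENNReal.ofReal]
  rw [integral_withDensity_eq_integral_smul (measurable_subtype_coe.pow_const _).real_toNNReal,
    integral_subtype_comap measurableSet_Ioi fun r => (r ^ n).toNNReal • g r]
  refine setIntegral_congr_fun measurableSet_Ioi fun r hr => ?_
  rw [NNReal.smul_def, Real.coe_toNNReal _ (pow_nonneg hr.out.le _)]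

theorem integral_eq_integral_toSphere_integral_Ioi {F : E → G} (hF : Integrable F μ) :
    ∫ y, F y ∂μ = ∫ ω : sphere (0 : E) 1,
      (∫ r in Ioi (0 : ℝ), r ^ (Module.finrank ℝ E - 1) • F (r • (ω : E))) ∂μ.toSphere := by
  set g : sphere (0 : E) 1 × Ioi (0 : ℝ) → G := fun p => F (p.2.1 • p.1.1)
  have hpres := μ.measurePreserving_homeomorphUnitSphereProd
  have hemb := (homeomorphUnitSphereProd E).measurableEmbedding
  have hg_comp : g ∘ homeomorphUnitSphereProd E = fun x => F x.1 := by
    ext x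
    simp [g, smul_inv_smul₀ (norm_ne_zero_iff.2 x.2)]
  have hg_int : Integrable g (μ.toSphere.prod (volumeIoiPow (Module.finrank ℝ E - 1))) := by
    rw [← hpres.integrable_comp_emb hemb, hg_comp]
    exact (integrableOn_iff_comap_subtypeVal (measurableSet_singleton 0).compl).1 hF.integrableOn
  calc ∫ y, F y ∂μ = ∫ x : ({0}ᶜ : Set E), F x ∂μ.comap Subtype.val := by
        rw [integral_subtype_comap (measurableSet_singleton _).compl, restrict_compl_singleton]
    _ = ∫ p, g p ∂μ.toSphere.prod (volumeIoiPow (Module.finrank ℝ E - 1)) := by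
        rw [← hpres.integral_comp hemb, ← hg_comp]
        rfl
    _ = _ := by
        rw [integral_prod g hg_int]
        exact integral_congr_ae (.of_forall fun ω => integral_volumeIoiPow _ fun r => F (r • ω.1))

end Polar

theorem integrableOn_Ioi_inv_one_add_sq :
    IntegrableOn (fun r : ℝ => ((1 + r) ^ 2)⁻¹) (Ioi 0) := by
  have h := (integrable_one_add_norm (E := ℝ) (μ := volume) (r := 2) (by norm_num)).integrableOn
    (s := Ioi 0)
  refine h.congr_fun (fun r (hr : 0 < r) => ?_) measurableSet_Ioi
  simp only [Real.norm_of_nonneg hr.le, Real.rpow_neg (by positivity : (0 : ℝ) ≤ 1 + r)]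
  norm_cast

theorem tendsto_inv_one_add_sq_atTop : Tendsto (fun r : ℝ => ((1 + r) ^ 2)⁻¹) atTop (𝓝 0) :=
  ((tendsto_pow_atTop two_ne_zero).comp
    (tendsto_atTop_add_const_left _ 1 tendsto_id)).inv_tendsto_atTop

theorem add_mul_le_mul_inv_one_add_sq {a b r D : ℝ} (hr : 0 ≤ r)
    (had : (1 + r) ^ 3 * a ≤ D) (hbd : (1 + r) ^ 3 * b ≤ D) :
    a + r * b ≤ D * ((1 + r) ^ 2)⁻¹ := by
  rw [← div_eq_mul_inv, le_div_iff₀ (by positivity)]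
  refine le_of_mul_le_mul_left ?_ (by positivity : 0 < 1 + r)
  nlinarith [mul_le_mul_of_nonneg_left hbd hr]

namespace SchwartzMap

variable {E : Type*} [NormedAddCommGroup E] [NormedSpace ℝ E]

theorem exists_one_add_norm_pow_mul_le {F : Type*} [NormedAddCommGroup F] [NormedSpace ℝ F]
    (f : 𝓢(E, F)) (k : ℕ) :
    ∃ D, ∀ z, (1 + ‖z‖) ^ k * ‖f z‖ ≤ D ∧ (1 + ‖z‖) ^ k * ‖fderiv ℝ f z‖ ≤ D := by
  refine ⟨2 ^ k * (Finset.Iic (k, 1)).sup (fun m => SchwartzMap.seminorm ℝ m.1 m.2) f,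
    fun z => ⟨?_, ?_⟩⟩
  · simpa using one_add_le_sup_seminorm_apply (𝕜 := ℝ) (m := (k, 1)) le_rfl zero_le_one f z
  · simpa [norm_iteratedFDeriv_one] using
      one_add_le_sup_seminorm_apply (𝕜 := ℝ) (m := (k, 1)) le_rfl le_rfl f z

theorem hasDerivAt_ofReal_mul_comp_smul (f : 𝓢(E, ℂ)) (ω : E) (r : ℝ) :
    HasDerivAt (fun s : ℝ => (s : ℂ) * f (s • ω)) (f (r • ω) + r * fderiv ℝ f (r • ω) ω) r := by
  have hray : HasDerivAt (fun s : ℝ => f (s • ω)) (fderiv ℝ f (r • ω) ω) r := by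
    have := (f.differentiableAt.hasFDerivAt).comp_hasDerivAt r ((hasDerivAt_id r).smul_const ω)
    rwa [one_smul] at this
  have := (hasDerivAt_id r).ofReal_comp.mul hray
  simp only [id, ofReal_one, one_mul] at this
  exact this

variable {f : 𝓢(E, ℂ)} {D : ℝ} {ω : E} {r : ℝ}

theorem norm_ofReal_mul_comp_smul_le (hD : ∀ z, (1 + ‖z‖) ^ 3 * ‖f z‖ ≤ D) (hω : ‖ω‖ = 1)
    (hr : 0 ≤ r) : ‖(r : ℂ) * f (r • ω)‖ ≤ D * ((1 + r) ^ 2)⁻¹ := by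
  have hf := hD (r • ω)
  rw [norm_smul, hω, mul_one, Real.norm_of_nonneg hr] at hf
  rw [norm_mul, norm_real, Real.norm_of_nonneg hr]
  linarith [add_mul_le_mul_inv_one_add_sq hr hf hf, norm_nonneg (f (r • ω))]

theorem norm_deriv_ofReal_mul_comp_smul_le (hD : ∀ z, (1 + ‖z‖) ^ 3 * ‖f z‖ ≤ D)
    (hD' : ∀ z, (1 + ‖z‖) ^ 3 * ‖fderiv ℝ f z‖ ≤ D) (hω : ‖ω‖ = 1) (hr : 0 ≤ r) :
    ‖f (r • ω) + r * fderiv ℝ f (r • ω) ω‖ ≤ D * ((1 + r) ^ 2)⁻¹ := by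
  have hnorm : ‖r • ω‖ = r := by rw [norm_smul, hω, mul_one, Real.norm_of_nonneg hr]
  have hf := hD (r • ω)
  have hf' := hD' (r • ω)
  rw [hnorm] at hf hf'
  calc ‖f (r • ω) + r * fderiv ℝ f (r • ω) ω‖
      ≤ ‖f (r • ω)‖ + r * ‖fderiv ℝ f (r • ω)‖ := by
        refine (norm_add_le _ _).trans (add_le_add le_rfl ?_)
        rw [norm_mul, norm_real, Real.norm_of_nonneg hr]
        exact mul_le_mul_of_nonneg_left (by simpa [hω] using (fderiv ℝ f (r • ω)).le_opNorm ω) hr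
    _ ≤ D * ((1 + r) ^ 2)⁻¹ := add_mul_le_mul_inv_one_add_sq hr hf hf'

theorem norm_integral_Ioi_exp_mul_ofReal_mul_comp_smul_le
    (hD : ∀ z, (1 + ‖z‖) ^ 3 * ‖f z‖ ≤ D) (hD' : ∀ z, (1 + ‖z‖) ^ 3 * ‖fderiv ℝ f z‖ ≤ D)
    (hω : ‖ω‖ = 1) {l : ℝ} (hl : l ≠ 0) :
    ‖∫ r in Ioi (0 : ℝ), exp (I * l * r) * ((r : ℂ) * f (r • ω))‖ ≤
      |l|⁻¹ * (D * ∫ r in Ioi (0 : ℝ), ((1 + r) ^ 2)⁻¹) := by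
  have hmaj := integrableOn_Ioi_inv_one_add_sq.const_mul D
  have hφ_cont : Continuous fun r : ℝ => (r : ℂ) * f (r • ω) := by fun_prop
  have hφ'_cont : Continuous fun r : ℝ => f (r • ω) + r * fderiv ℝ f (r • ω) ω := by
    have := (f.smooth ⊤).continuous_fderiv (by simp)
    fun_prop
  have hφ_int : IntegrableOn (fun r : ℝ => (r : ℂ) * f (r • ω)) (Ioi 0) :=
    hmaj.mono' hφ_cont.aestronglyMeasurable.restrict <| (ae_restrict_mem measurableSet_Ioi).mono
      fun r hr => norm_ofReal_mul_comp_smul_le hD hω (le_of_lt hr)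
  have hφ'_int : IntegrableOn (fun r : ℝ => f (r • ω) + r * fderiv ℝ f (r • ω) ω) (Ioi 0) :=
    hmaj.mono' hφ'_cont.aestronglyMeasurable.restrict <| (ae_restrict_mem measurableSet_Ioi).mono
      fun r hr => norm_deriv_ofReal_mul_comp_smul_le hD hD' hω (le_of_lt hr)
  have hφ_zero : Tendsto (fun r : ℝ => (r : ℂ) * f (r • ω)) (𝓝[>] 0) (𝓝 0) :=
    (hφ_cont.tendsto' 0 0 (by simp)).mono_left nhdsWithin_le_nhds
  have hφ_top : Tendsto (fun r : ℝ => (r : ℂ) * f (r • ω)) atTop (𝓝 0) := by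
    refine squeeze_zero_norm' ((eventually_ge_atTop 0).mono fun r hr => ?_)
      (by simpa using tendsto_inv_one_add_sq_atTop.const_mul D)
    exact norm_ofReal_mul_comp_smul_le hD hω hr
  refine (norm_integral_Ioi_exp_mul_le hl (fun r _ => hasDerivAt_ofReal_mul_comp_smul f ω r)
    hφ_zero hφ_top hφ_int hφ'_int).trans ?_
  gcongr
  calc ∫ r in Ioi (0 : ℝ), ‖f (r • ω) + r * fderiv ℝ f (r • ω) ω‖
      ≤ ∫ r in Ioi (0 : ℝ), D * ((1 + r) ^ 2)⁻¹ :=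
        setIntegral_mono_on hφ'_int.norm hmaj measurableSet_Ioi
          fun r hr => norm_deriv_ofReal_mul_comp_smul_le hD hD' hω (le_of_lt hr)
    _ = D * ∫ r in Ioi (0 : ℝ), ((1 + r) ^ 2)⁻¹ := integral_const_mul _ _

end SchwartzMap

section ThreeDimensional

variable {E : Type*} [NormedAddCommGroup E] [NormedSpace ℝ E] [MeasurableSpace E] [BorelSpace E]
  [FiniteDimensional ℝ E] (μ : Measure E) [μ.IsAddHaarMeasure] (f : 𝓢(E, ℂ))

theorem integrable_exp_mul_norm_mul_div_norm (hE : Module.finrank ℝ E = 3) (l : ℝ) :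
    Integrable (fun y => exp (I * l * ‖y‖) * f y / ‖y‖) μ := by
  have : Nontrivial E := Module.nontrivial_of_finrank_pos (R := ℝ) (by omega)
  obtain ⟨D, hD⟩ := f.exists_one_add_norm_pow_mul_le 3
  set g : ℝ → ℝ := fun s => D / ((1 + s) ^ 3 * s)
  have hg : Integrable (fun y : E => g ‖y‖) μ := by
    rw [integrable_fun_norm_addHaar μ, hE]
    refine (integrableOn_Ioi_inv_one_add_sq.const_mul D).mono' (by fun_prop) <|
      (ae_restrict_mem measurableSet_Ioi).mono fun s (hs : 0 < s) => ?_
    have hD0 : 0 ≤ D := (mul_nonneg (by positivity) (norm_nonneg _)).trans (hD 0).1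
    have hs1 : s / (1 + s) ≤ 1 := (div_le_one (by positivity)).2 (by linarith)
    calc ‖s ^ 2 • g s‖ = D * ((1 + s) ^ 2)⁻¹ * (s / (1 + s)) := by
          rw [Real.norm_of_nonneg (by positivity), smul_eq_mul]
          simp only [g]
          field_simp
      _ ≤ D * ((1 + s) ^ 2)⁻¹ := mul_le_of_le_one_right (by positivity) hs1
  have hmeas : Measurable fun y : E => exp (I * l * ‖y‖) * f y / ‖y‖ := by fun_prop
  refine hg.mono' hmeas.aestronglyMeasurable (.of_forall fun y => ?_)
  calc ‖exp (I * l * ‖y‖) * f y / ‖y‖‖ = ‖f y‖ / ‖y‖ := by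
        simp [norm_exp]
    _ ≤ D / (1 + ‖y‖) ^ 3 / ‖y‖ := by
        gcongr
        rw [le_div_iff₀ (by positivity), mul_comm]
        exact (hD y).1
    _ = g ‖y‖ := div_div _ _ _

theorem exists_abs_mul_norm_integral_exp_mul_norm_mul_div_norm_le
    (hE : Module.finrank ℝ E = 3) :
    ∃ M, ∀ l : ℝ, l ≠ 0 → |l| * ‖∫ y, exp (I * l * ‖y‖) * f y / ‖y‖ ∂μ‖ ≤ M := by
  have : Nontrivial E := Module.nontrivial_of_finrank_pos (R := ℝ) (by omega)
  obtain ⟨D, hD⟩ := f.exists_one_add_norm_pow_mul_le 3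
  set K := D * ∫ r in Ioi (0 : ℝ), ((1 + r) ^ 2)⁻¹
  refine ⟨K * μ.toSphere.real univ, fun l hl => ?_⟩
  have hray (ω : sphere (0 : E) 1) : ‖∫ r in Ioi (0 : ℝ),
      r ^ (Module.finrank ℝ E - 1) • (exp (I * l * ‖r • (ω : E)‖) * f (r • ω) / ‖r • (ω : E)‖)‖
        ≤ |l|⁻¹ * K := by
    have hω : ‖(ω : E)‖ = 1 := norm_eq_of_mem_sphere ω
    refine le_of_eq_of_le (congrArg norm (setIntegral_congr_fun measurableSet_Ioi fun r hr => ?_))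
      (f.norm_integral_Ioi_exp_mul_ofReal_mul_comp_smul_le (fun z => (hD z).1) (fun z => (hD z).2)
        hω hl)
    have hr : (0 : ℝ) < r := hr
    rw [hE, norm_smul, hω, mul_one, Real.norm_of_nonneg hr.le, real_smul, ofReal_pow]
    simp only [Nat.reduceSub]
    field_simp
  calc |l| * ‖∫ y, exp (I * l * ‖y‖) * f y / ‖y‖ ∂μ‖
      ≤ |l| * (|l|⁻¹ * K * μ.toSphere.real univ) := by
        rw [integral_eq_integral_toSphere_integral_Ioi μ
          (integrable_exp_mul_norm_mul_div_norm μ f hE l)]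
        gcongr
        exact norm_integral_le_of_norm_le_const (.of_forall hray)
    _ = K * μ.toSphere.real univ := by field_simp

end ThreeDimensional

/-- If `f` is Schwartz on `ℝ³`, then `F₋₁(x,t) := ∫ e^{i|x||y|/(2t)} f(y)/|y| d³y = 𝒪(1)`:
there are `C, R₀, T₀ > 0` such that `(|x|/t)^q |F₋₁(x,t)| ≤ C` for all `|x| ≥ R₀`,
`t ≥ T₀` and `0 ≤ q ≤ 1`. -/
theorem schwartz_radial_oscillatory_integral_O_one
    (f : SchwartzMap (EuclideanSpace ℝ (Fin 3)) ℂ) :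
    ∃ C > 0, ∃ R₀ > 0, ∃ T₀ > 0,
      ∀ x : EuclideanSpace ℝ (Fin 3), R₀ ≤ ‖x‖ → ∀ t : ℝ, T₀ ≤ t → ∀ q : ℕ, q ≤ 1 →
        (‖x‖ / t) ^ q *
          ‖∫ y : EuclideanSpace ℝ (Fin 3),
              Complex.exp (Complex.I * ‖x‖ * ‖y‖ / (2 * t)) * f y / (‖y‖ : ℂ)‖ ≤ C := by
  have hE : Module.finrank ℝ (EuclideanSpace ℝ (Fin 3)) = 3 := by simp
  obtain ⟨M, hM⟩ := exists_abs_mul_norm_integral_exp_mul_norm_mul_div_norm_le volume f hE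
  set M₀ := ∫ y : EuclideanSpace ℝ (Fin 3), ‖f y‖ / ‖y‖
  refine ⟨max (max M₀ (2 * M)) 1, by positivity, 1, one_pos, 1, one_pos,
    fun x hx t ht q hq => ?_⟩
  set l := ‖x‖ / (2 * t)
  have hl : 0 < l := by positivity
  have hphase (y : EuclideanSpace ℝ (Fin 3)) :
      I * ‖x‖ * ‖y‖ / (2 * t) = I * l * ‖y‖ := by
    simp only [l, ofReal_div, ofReal_mul, ofReal_ofNat]
    ring
  simp_rw [hphase]
  interval_cases q
  · calc _ = ‖∫ y : EuclideanSpace ℝ (Fin 3), exp (I * l * ‖y‖) * f y / ‖y‖‖ := one_mul _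
      _ ≤ ∫ y : EuclideanSpace ℝ (Fin 3), ‖exp (I * l * ‖y‖) * f y / ‖y‖‖ :=
        norm_integral_le_integral_norm _
      _ = M₀ := integral_congr_ae (.of_forall fun y => by simp [norm_exp])
      _ ≤ _ := (le_max_left _ _).trans (le_max_left _ _)
  · have hxt : ‖x‖ / t = 2 * |l| := by
      rw [abs_of_pos hl]
      simp only [l]
      field_simp
    rw [pow_one, hxt, mul_assoc]
    calc 2 * (|l| * _) ≤ 2 * M := by gcongr; exact hM l hl.ne'
      _ ≤ _ := (le_max_right _ _).trans (le_max_left _ _)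
end

section
/- Let ψ ∈ 𝒮(ℝ³) with spherical average Ψ(k) := ∫_{S²} ψ(k ω) dΩ(ω), and suppose Ψ(0) = 0 (equivalently ψ(0) = 0). Then there is C such that for all t ≥ 1 and k-integral b₁(x,t) := (1/|x|) ∫₀^∞ e^{−ik²t − i|x|k} k Ψ(k) dk satisfies sup_{|x|=R} |b₁(x,t)| ≤ C/(R(R+t)) for all R > 0, t ≥ 1. -/
/-!
Write the phase of `b₁` as `-(k²t + k|x|)`. Its `k`-derivative `-(2tk + |x|)` has modulus at least
`min 1 (2k) · (t + |x|)`, so along each ray `k ↦ ψ (k ω)` one integration by parts in `k`, dividing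
by the phase derivative, gains the factor `1 / (t + |x|)`. The loss `min 1 (2k)` near `k = 0` is
paid for by `ψ 0 = 0`, i.e. `ψ (k ω) = O(k)`, which also kills the boundary term at `k = 0`, while
the decay of `ψ` makes the remaining integral converge. Swapping the `k`- and `ω`-integrals and
multiplying by `1 / |x|` gives the bound `C / (|x| (|x| + t))`.
-/

open MeasureTheory Set Filter Topology Real

lemma min_one_two_mul_mul_add_le {t r k : ℝ} (ht : 0 ≤ t) (hr : 0 ≤ r) :
    min 1 (2 * k) * (t + r) ≤ 2 * t * k + r := by
  rcases le_total 1 (2 * k) with h | h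
  · rw [min_eq_left h]; nlinarith
  · rw [min_eq_right h]; nlinarith

lemma mul_le_div_one_add_sq {x a M : ℝ} (hx : 0 ≤ x) (ha : 0 ≤ a) (hM : (1 + x) ^ 3 * a ≤ M) :
    x * a ≤ M / (1 + x ^ 2) := by
  rw [le_div_iff₀ (by positivity)]
  have : x * (1 + x ^ 2) ≤ (1 + x) ^ 3 := by nlinarith [pow_nonneg hx 3]
  nlinarith

lemma one_add_sq_mul_two_mul_add_mul_le {k a b M : ℝ} (hk : 0 ≤ k) (ha : 0 ≤ a) (hb : 0 ≤ b)
    (ha₀ : a ≤ M * k) (hb₀ : b ≤ M) (ha_decay : (1 + k) ^ 3 * a ≤ M)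
    (hb_decay : (1 + k) ^ 3 * b ≤ M) :
    (1 + k ^ 2) * (2 * a + k * b) ≤ 2 * M * min 1 (2 * k) := by
  rcases le_total 1 (2 * k) with h | h
  · rw [min_eq_left h, mul_one]
    have hp : (1 + k ^ 2) * (1 + k) ≤ (1 + k) ^ 3 := by nlinarith
    suffices (1 + k) * ((1 + k ^ 2) * (2 * a + k * b)) ≤ (1 + k) * (2 * M) from
      le_of_mul_le_mul_left this (by linarith)
    nlinarith [mul_le_mul_of_nonneg_right hp ha, mul_le_mul_of_nonneg_right hp (mul_nonneg hk hb)]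
  · rw [min_eq_right h]
    have hM : 0 ≤ M := hb.trans hb₀
    nlinarith [mul_nonneg hM hk, mul_nonneg (mul_nonneg hM hk) (sq_nonneg k)]

noncomputable def chirp (t r k : ℝ) : ℂ :=
  Complex.exp (-Complex.I * (k : ℂ) ^ 2 * t - Complex.I * r * k)

lemma norm_chirp (t r k : ℝ) : ‖chirp t r k‖ = 1 := by
  rw [chirp, Complex.norm_exp]
  simp [Complex.mul_re, Complex.mul_im, pow_two]

@[fun_prop]
lemma continuous_chirp (t r : ℝ) : Continuous (chirp t r) := by
  unfold chirp; fun_prop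

lemma hasDerivAt_chirp (t r k : ℝ) :
    HasDerivAt (chirp t r) (-Complex.I * ((2 * t * k + r : ℝ) : ℂ) * chirp t r k) k := by
  have h : HasDerivAt (fun z : ℂ => -Complex.I * z ^ 2 * t - Complex.I * r * z)
      (-Complex.I * ((2 * t * k + r : ℝ) : ℂ)) k :=
    ((((hasDerivAt_pow 2 (k : ℂ)).const_mul (-Complex.I)).mul_const (t : ℂ)).sub
      ((hasDerivAt_id (k : ℂ)).const_mul (Complex.I * r))).congr_deriv (by push_cast; ring)
  exact h.comp_ofReal.cexp.congr_deriv (mul_comm _ _)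

lemma hasDerivAt_mul_div_affine {f : ℝ → ℂ} {f' : ℂ} {t r k : ℝ} (hf : HasDerivAt f f' k)
    (hd : 2 * t * k + r ≠ 0) :
    HasDerivAt (fun k : ℝ => k * f k / ((2 * t * k + r : ℝ) : ℂ))
      ((f k + k * f') / ((2 * t * k + r : ℝ) : ℂ)
        - 2 * t * k * f k / ((2 * t * k + r : ℝ) : ℂ) ^ 2) k := by
  have hd_deriv : HasDerivAt (fun k : ℝ => ((2 * t * k + r : ℝ) : ℂ)) ((2 * t : ℝ) : ℂ) k :=
    (((hasDerivAt_id k).const_mul (2 * t)).add_const r).ofReal_comp.congr_deriv (by simp)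
  have hd_ne : ((2 * t * k + r : ℝ) : ℂ) ≠ 0 := Complex.ofReal_ne_zero.2 hd
  refine ((((hasDerivAt_id k).ofReal_comp).mul hf).div hd_deriv hd_ne).congr_deriv ?_
  simp only [id, Pi.mul_apply]
  field_simp
  push_cast; ring

lemma norm_div_affine_sub_le (a b : ℂ) {t r k : ℝ} (ht : 0 ≤ t) (hr : 0 < r) (hk : 0 ≤ k) :
    ‖(a + k * b) / ((2 * t * k + r : ℝ) : ℂ) - 2 * t * k * a / ((2 * t * k + r : ℝ) : ℂ) ^ 2‖
      ≤ (2 * ‖a‖ + k * ‖b‖) / (2 * t * k + r) := by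
  have hd : 0 < 2 * t * k + r := by positivity
  have h2tk : 0 ≤ 2 * t * k := by positivity
  have hnorm : ‖((2 * t * k + r : ℝ) : ℂ)‖ = 2 * t * k + r := by
    rw [Complex.norm_real, Real.norm_of_nonneg hd.le]
  have h1 : ‖(a + k * b) / ((2 * t * k + r : ℝ) : ℂ)‖ ≤ (‖a‖ + k * ‖b‖) / (2 * t * k + r) := by
    rw [norm_div, hnorm]
    gcongr
    refine (norm_add_le _ _).trans_eq ?_
    rw [norm_mul, Complex.norm_real, Real.norm_of_nonneg hk]
  have h2 : ‖2 * t * k * a / ((2 * t * k + r : ℝ) : ℂ) ^ 2‖ ≤ ‖a‖ / (2 * t * k + r) := by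
    rw [norm_div, norm_pow, hnorm, div_le_div_iff₀ (by positivity) hd]
    rw [norm_mul, show (2 * t * k : ℂ) = ((2 * t * k : ℝ) : ℂ) by push_cast; ring,
      Complex.norm_real, Real.norm_of_nonneg h2tk]
    nlinarith [mul_nonneg (mul_nonneg (norm_nonneg a) hd.le) hr.le]
  calc _ ≤ _ := norm_sub_le _ _
    _ ≤ (‖a‖ + k * ‖b‖) / (2 * t * k + r) + ‖a‖ / (2 * t * k + r) := add_le_add h1 h2
    _ = _ := by ring

noncomputable def ibpAmplitude (t r : ℝ) (f : ℝ → ℂ) (k : ℝ) : ℂ :=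
  Complex.I * (k * f k / ((2 * t * k + r : ℝ) : ℂ))

section ibpAmplitude

variable {f : ℝ → ℂ} {t r k : ℝ}

lemma chirp_mul_eq_ibpAmplitude_mul (hk : 2 * t * k + r ≠ 0) :
    chirp t r k * k * f k
      = ibpAmplitude t r f k * (-Complex.I * ((2 * t * k + r : ℝ) : ℂ) * chirp t r k) := by
  have hk' : ((2 * t * k + r : ℝ) : ℂ) ≠ 0 := Complex.ofReal_ne_zero.2 hk
  rw [ibpAmplitude]
  field_simp
  rw [Complex.I_sq]; ring

lemma hasDerivAt_ibpAmplitude {f' : ℂ} (hf : HasDerivAt f f' k) (hk : 2 * t * k + r ≠ 0) :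
    HasDerivAt (ibpAmplitude t r f) (Complex.I * ((f k + k * f') / ((2 * t * k + r : ℝ) : ℂ)
      - 2 * t * k * f k / ((2 * t * k + r : ℝ) : ℂ) ^ 2)) k :=
  (hasDerivAt_mul_div_affine hf hk).const_mul Complex.I

lemma norm_ibpAmplitude_mul_chirp (hk : 0 < 2 * t * k + r) :
    ‖ibpAmplitude t r f k * chirp t r k‖ = ‖chirp t r k * k * f k‖ / (2 * t * k + r) := by
  simp only [ibpAmplitude, norm_mul, norm_div, Complex.norm_I, norm_chirp, Complex.norm_real,
    Real.norm_of_nonneg hk.le]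
  ring

lemma tendsto_ibpAmplitude_mul_chirp_nhdsGT (hf : Continuous f) (hr : 0 < r) :
    Tendsto (ibpAmplitude t r f * chirp t r) (𝓝[>] 0) (𝓝 0) := by
  have hc : ContinuousAt (ibpAmplitude t r f * chirp t r) 0 :=
    (continuousAt_const.mul ((Complex.continuous_ofReal.mul hf).continuousAt.div
      (by fun_prop) (by simpa using hr.ne'))).mul (continuous_chirp t r).continuousAt
  simpa [ibpAmplitude] using hc.tendsto.mono_left nhdsWithin_le_nhds

end ibpAmplitude

structure AmplitudeBound {F : Type*} [Norm F] (M : ℝ) (f f' : ℝ → F) : Prop where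
  norm_le : ∀ k > 0, ‖f k‖ ≤ M * k
  norm_deriv_le : ∀ k > 0, ‖f' k‖ ≤ M
  decay : ∀ k > 0, (1 + k) ^ 3 * ‖f k‖ ≤ M
  decay_deriv : ∀ k > 0, (1 + k) ^ 3 * ‖f' k‖ ≤ M

namespace AmplitudeBound

variable {M t r : ℝ} {f f' : ℝ → ℂ}

lemma nonneg (h : AmplitudeBound M f f') : 0 ≤ M :=
  (norm_nonneg _).trans (h.norm_deriv_le 1 one_pos)

lemma norm_chirp_mul_le (h : AmplitudeBound M f f') (t r : ℝ) {k : ℝ} (hk : 0 < k) :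
    ‖chirp t r k * k * f k‖ ≤ M * (1 + k ^ 2)⁻¹ := by
  rw [norm_mul, norm_mul, norm_chirp, one_mul, Complex.norm_real, Real.norm_of_nonneg hk.le,
    ← div_eq_mul_inv]
  exact mul_le_div_one_add_sq hk.le (norm_nonneg _) (h.decay k hk)

lemma norm_deriv_mul_div_affine_le (h : AmplitudeBound M f f') {k : ℝ} (ht : 0 ≤ t)
    (hr : 0 < r) (hk : 0 < k) :
    ‖(f k + k * f' k) / ((2 * t * k + r : ℝ) : ℂ)
        - 2 * t * k * f k / ((2 * t * k + r : ℝ) : ℂ) ^ 2‖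
      ≤ 2 * M / (t + r) * (1 + k ^ 2)⁻¹ := by
  refine (norm_div_affine_sub_le _ _ ht hr hk.le).trans ?_
  have hamp := one_add_sq_mul_two_mul_add_mul_le hk.le (norm_nonneg _) (norm_nonneg _)
    (h.norm_le k hk) (h.norm_deriv_le k hk) (h.decay k hk) (h.decay_deriv k hk)
  have hphase := min_one_two_mul_mul_add_le (k := k) ht hr.le
  have htr : 0 < t + r := by positivity
  have hM := h.nonneg
  rw [div_mul_eq_mul_div, ← div_eq_mul_inv, div_div,
    div_le_div_iff₀ (by positivity) (by positivity)]
  nlinarith [mul_le_mul_of_nonneg_left hphase (by positivity : 0 ≤ 2 * M),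
    mul_le_mul_of_nonneg_right hamp htr.le]

lemma tendsto_ibpAmplitude_mul_chirp_atTop (h : AmplitudeBound M f f') (ht : 0 ≤ t)
    (hr : 0 < r) : Tendsto (ibpAmplitude t r f * chirp t r) atTop (𝓝 0) := by
  have hlim : Tendsto (fun k : ℝ => M * (1 + k ^ 2)⁻¹ / r) atTop (𝓝 0) := by
    simpa using ((tendsto_inv_atTop_zero.comp (tendsto_atTop_add_const_left _ 1
      (tendsto_pow_atTop two_ne_zero))).const_mul M).div_const r
  refine squeeze_zero_norm' ((eventually_gt_atTop 0).mono fun k hk => ?_) hlim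
  have hd : r ≤ 2 * t * k + r := by nlinarith
  rw [Pi.mul_apply, norm_ibpAmplitude_mul_chirp (hr.trans_le hd)]
  exact div_le_div₀ ((norm_nonneg _).trans (h.norm_chirp_mul_le t r hk))
    (h.norm_chirp_mul_le t r hk) hr hd

end AmplitudeBound

theorem norm_integral_Ioi_chirp_mul_le {f f' : ℝ → ℂ} {M t r : ℝ} (ht : 0 ≤ t) (hr : 0 < r)
    (hf : ∀ k, HasDerivAt f (f' k) k) (hf' : Continuous f') (h : AmplitudeBound M f f') :
    ‖∫ k in Ioi 0, chirp t r k * k * f k‖ ≤ π * M / (t + r) := by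
  have hd : ∀ k ∈ Ioi (0 : ℝ), 0 < 2 * t * k + r := fun k hk => by
    have : 0 < k := hk; positivity
  have hfc : Continuous f := continuous_iff_continuousAt.2 fun k => (hf k).continuousAt
  set d : ℝ → ℂ := fun k => ((2 * t * k + r : ℝ) : ℂ)
  have hd_ne : ∀ k ∈ Ioi (0 : ℝ), d k ≠ 0 := fun k hk => Complex.ofReal_ne_zero.2 (hd k hk).ne'
  set u' : ℝ → ℂ := fun k => Complex.I * ((f k + k * f' k) / d k - 2 * t * k * f k / d k ^ 2)
  have hsplit : EqOn (fun k => chirp t r k * k * f k)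
      (ibpAmplitude t r f * fun k => -Complex.I * d k * chirp t r k) (Ioi 0) := fun k hk =>
    chirp_mul_eq_ibpAmplitude_mul (hd k hk).ne'
  have hbound : ∀ k > 0, ‖u' k * chirp t r k‖ ≤ 2 * M / (t + r) * (1 + k ^ 2)⁻¹ := fun k hk => by
    rw [norm_mul, norm_chirp, mul_one, norm_mul, Complex.norm_I, one_mul]
    exact h.norm_deriv_mul_div_affine_le ht hr hk
  have hint : IntegrableOn (fun k => chirp t r k * k * f k) (Ioi 0) :=
    Integrable.mono' (integrable_inv_one_add_sq.const_mul M).integrableOn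
      (by fun_prop : Continuous fun k : ℝ => chirp t r k * k * f k).aestronglyMeasurable
      ((ae_restrict_mem measurableSet_Ioi).mono fun k hk => h.norm_chirp_mul_le t r hk)
  have hu'c : ContinuousOn (u' * chirp t r) (Ioi 0) := by
    refine ContinuousOn.mul (continuousOn_const.mul (ContinuousOn.sub ?_ ?_))
      (continuous_chirp t r).continuousOn
    · exact (by fun_prop : Continuous fun k : ℝ => f k + k * f' k).continuousOn.div
        (by fun_prop) hd_ne
    · exact (by fun_prop : Continuous fun k : ℝ => 2 * (t : ℂ) * k * f k).continuousOn.div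
        (by fun_prop) fun k hk => pow_ne_zero 2 (hd_ne k hk)
  have hint' : IntegrableOn (u' * chirp t r) (Ioi 0) :=
    Integrable.mono' (integrable_inv_one_add_sq.const_mul (2 * M / (t + r))).integrableOn
      (hu'c.aestronglyMeasurable measurableSet_Ioi)
      ((ae_restrict_mem measurableSet_Ioi).mono hbound)
  have hibp := integral_Ioi_mul_deriv_eq_deriv_mul
    (fun k hk => hasDerivAt_ibpAmplitude (hf k) (hd k hk).ne')
    (fun k _ => hasDerivAt_chirp t r k) (hint.congr_fun hsplit measurableSet_Ioi) hint'
    (tendsto_ibpAmplitude_mul_chirp_nhdsGT hfc hr) (h.tendsto_ibpAmplitude_mul_chirp_atTop ht hr)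
  simp only [sub_self, zero_sub] at hibp
  calc ‖∫ k in Ioi 0, chirp t r k * k * f k‖ = ‖∫ k in Ioi 0, u' k * chirp t r k‖ := by
        rw [setIntegral_congr_fun measurableSet_Ioi hsplit, Pi.mul_def, hibp, norm_neg]
    _ ≤ ∫ k in Ioi 0, 2 * M / (t + r) * (1 + k ^ 2)⁻¹ :=
        norm_integral_le_of_norm_le (integrable_inv_one_add_sq.const_mul _).integrableOn
          ((ae_restrict_mem measurableSet_Ioi).mono hbound)
    _ = π * M / (t + r) := by
        rw [integral_const_mul, integral_Ioi_inv_one_add_sq, arctan_zero]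
        ring

namespace SchwartzMap

variable {E F : Type*} [NormedAddCommGroup E] [NormedSpace ℝ E] [NormedAddCommGroup F]
  [NormedSpace ℝ F]

lemma exists_one_add_norm_pow_mul_le_s12 (ψ : 𝓢(E, F)) (n : ℕ) :
    ∃ C, ∀ x, (1 + ‖x‖) ^ n * ‖ψ x‖ ≤ C ∧ (1 + ‖x‖) ^ n * ‖fderiv ℝ ψ x‖ ≤ C := by
  refine ⟨2 ^ n * (Finset.Iic (n, 1)).sup (fun m => SchwartzMap.seminorm ℝ m.1 m.2) ψ,
    fun x => ⟨?_, ?_⟩⟩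
  · simpa using one_add_le_sup_seminorm_apply (𝕜 := ℝ) (m := (n, 1)) le_rfl zero_le_one ψ x
  · simpa [norm_iteratedFDeriv_one] using
      one_add_le_sup_seminorm_apply (𝕜 := ℝ) (m := (n, 1)) le_rfl le_rfl ψ x

lemma hasDerivAt_apply_smul (ψ : 𝓢(E, F)) (v : E) (k : ℝ) :
    HasDerivAt (fun k : ℝ => ψ (k • v)) (fderiv ℝ ψ (k • v) v) k :=
  (ψ.differentiableAt.hasFDerivAt.comp_hasDerivAt k
    ((hasDerivAt_id k).smul_const v)).congr_deriv (by simp)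

lemma continuous_fderiv_apply_smul (ψ : 𝓢(E, F)) (v : E) :
    Continuous fun k : ℝ => fderiv ℝ ψ (k • v) v :=
  ((ψ.smooth ⊤).continuous_fderiv (by simp)).clm_apply continuous_const |>.comp
    (continuous_id.smul continuous_const)

lemma exists_amplitudeBound_apply_smul (ψ : 𝓢(E, F)) (hψ : ψ 0 = 0) :
    ∃ M ≥ 0, ∀ v : E, ‖v‖ = 1 →
      AmplitudeBound M (fun k : ℝ => ψ (k • v)) (fun k => fderiv ℝ ψ (k • v) v) := by
  obtain ⟨C, hC⟩ := ψ.exists_one_add_norm_pow_mul_le_s12 3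
  have hD : ∀ y, ‖fderiv ℝ ψ y‖ ≤ C := fun y =>
    le_trans (le_mul_of_one_le_left (norm_nonneg _) (one_le_pow₀ (by simp))) (hC y).2
  have hψC : ∀ y, ‖ψ y‖ ≤ C * ‖y‖ := fun y => by
    simpa [hψ] using convex_univ.norm_image_sub_le_of_norm_fderiv_le
      (fun y _ => ψ.differentiableAt) (fun y _ => hD y) (mem_univ 0) (mem_univ y)
  refine ⟨C, le_trans (by positivity) (hC 0).1, fun v hv => ?_⟩
  have hkv : ∀ k > (0 : ℝ), ‖k • v‖ = k := fun k hk => by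
    rw [norm_smul, hv, mul_one, Real.norm_of_nonneg hk.le]
  have hDv : ∀ k : ℝ, ‖fderiv ℝ ψ (k • v) v‖ ≤ ‖fderiv ℝ ψ (k • v)‖ := fun k => by
    simpa [hv] using (fderiv ℝ ψ (k • v)).le_opNorm v
  refine ⟨fun k hk => ?_, fun k _ => (hDv k).trans (hD _), fun k hk => ?_, fun k hk => ?_⟩
  · simpa [hkv k hk] using hψC (k • v)
  · simpa [hkv k hk] using (hC (k • v)).1
  · refine le_trans ?_ (hC (k • v)).2
    rw [hkv k hk]
    exact mul_le_mul_of_nonneg_left (hDv k) (by positivity)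

end SchwartzMap

lemma norm_integral_integral_le_of_forall {α X G : Type*} [MeasurableSpace α]
    [MeasurableSpace X] [NormedAddCommGroup G] [NormedSpace ℝ G] {ν : Measure α} [SFinite ν]
    {μ : Measure X} [IsFiniteMeasure μ] {F : α → X → G} {B : ℝ}
    (hF : Integrable (Function.uncurry F) (ν.prod μ)) (hB : ∀ x, ‖∫ a, F a x ∂ν‖ ≤ B) :
    ‖∫ a, ∫ x, F a x ∂μ ∂ν‖ ≤ B * μ.real univ := by
  rw [integral_integral_swap hF]
  exact norm_integral_le_of_norm_le_const (Eventually.of_forall hB)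

/-- Let `ψ` be Schwartz on `ℝ³` with `ψ(0) = 0`, and let
`Ψ(k) := ∫_{S²} ψ(kω) dΩ(ω)` be its spherical average. Then
`b₁(x,t) := |x|⁻¹ ∫₀^∞ e^{-ik²t - i|x|k} k Ψ(k) dk` satisfies
`sup_{|x|=R} |b₁(x,t)| ≤ C/(R(R+t))` for all `R > 0`, `t ≥ 1`. -/
theorem b1_estimate (ψ : SchwartzMap (EuclideanSpace ℝ (Fin 3)) ℂ) (hψ : ψ 0 = 0) :
    ∃ C > 0, ∀ R : ℝ, 0 < R → ∀ t : ℝ, 1 ≤ t →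
      ∀ x : EuclideanSpace ℝ (Fin 3), ‖x‖ = R →
        ‖(1 / (‖x‖ : ℂ)) *
            ∫ k in Set.Ioi (0 : ℝ),
              Complex.exp (-Complex.I * (k : ℂ) ^ 2 * t - Complex.I * ‖x‖ * k) * (k : ℂ) *
                ∫ ω : Metric.sphere (0 : EuclideanSpace ℝ (Fin 3)) 1,
                  ψ (k • (ω : EuclideanSpace ℝ (Fin 3)))
                  ∂((volume : Measure (EuclideanSpace ℝ (Fin 3))).toSphere)‖
          ≤ C / (R * (R + t)) := by
  obtain ⟨M, hM₀, hM⟩ := ψ.exists_amplitudeBound_apply_smul hψ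
  set μ := (volume : Measure (EuclideanSpace ℝ (Fin 3))).toSphere
  refine ⟨π * M * μ.real univ + 1, by positivity, ?_⟩
  rintro R hR t ht x rfl
  have hω : ∀ ω : Metric.sphere (0 : EuclideanSpace ℝ (Fin 3)) 1,
      ‖(ω : EuclideanSpace ℝ (Fin 3))‖ = 1 := fun ω => by simp
  have hint : Integrable
      (Function.uncurry fun k (ω : Metric.sphere (0 : EuclideanSpace ℝ (Fin 3)) 1) =>
        chirp t ‖x‖ k * k * ψ (k • (ω : EuclideanSpace ℝ (Fin 3))))
      ((volume.restrict (Ioi 0)).prod μ) :=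
    Integrable.mono' ((integrable_inv_one_add_sq.const_mul M).integrableOn.comp_fst μ)
      (by fun_prop : Continuous _).aestronglyMeasurable
      ((Measure.quasiMeasurePreserving_fst.ae (ae_restrict_mem measurableSet_Ioi)).mono
        fun z hz => (hM _ (hω z.2)).norm_chirp_mul_le t ‖x‖ hz)
  have hbound := norm_integral_integral_le_of_forall hint fun ω =>
    norm_integral_Ioi_chirp_mul_le (by linarith) hR (ψ.hasDerivAt_apply_smul _)
      (ψ.continuous_fderiv_apply_smul _) (hM _ (hω ω))
  rw [norm_mul, norm_div, norm_one, Complex.norm_real, norm_norm]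
  simp_rw [← integral_const_mul]
  calc _ ≤ 1 / ‖x‖ * (π * M / (t + ‖x‖) * μ.real univ) :=
        mul_le_mul_of_nonneg_left hbound (by positivity)
    _ = π * M * μ.real univ / (‖x‖ * (‖x‖ + t)) := by field_simp; ring
    _ ≤ _ := by gcongr; linarith
end

section
/- There exist constants C₁, C₂ > 0 such that for all R > 0 and t ≥ 1, |∫₀^∞ e^{−ik²t − iRk} k e^{−k²} dk| ≤ C₁/(R+t) + C₂/t. -/
open MeasureTheory Set Filter Topology Complex

/-- The arctan integral: `∫₀^∞ R/(R² + (2t)²k²) dk = π/(4t)`, plus integrability. -/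
lemma arctan_aux (R t : ℝ) (hR : 0 < R) (ht : 0 < t) :
    IntegrableOn (fun k : ℝ => R / (R ^ 2 + (2 * t) ^ 2 * k ^ 2)) (Ioi 0) ∧
      ∫ k in Ioi (0:ℝ), R / (R ^ 2 + (2 * t) ^ 2 * k ^ 2) = Real.pi / (4 * t) := by
  set B : ℝ → ℝ := fun k => R / (R ^ 2 + (2 * t) ^ 2 * k ^ 2) with hB
  set F : ℝ → ℝ := fun k => (1 / (2 * t)) * Real.arctan (2 * t / R * k) with hF
  have hderiv : ∀ k : ℝ, HasDerivAt F (B k) k := by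
    intro k
    have h1 : HasDerivAt (fun k : ℝ => 2 * t / R * k) (2 * t / R) k :=
      (hasDerivAt_id k).const_mul _ |>.congr_deriv (by ring)
    have h2 := (Real.hasDerivAt_arctan (2 * t / R * k)).comp k h1
    have h3 := h2.const_mul (1 / (2 * t))
    refine h3.congr_deriv ?_
    have hne : R ^ 2 + (2 * t) ^ 2 * k ^ 2 > 0 := by positivity
    simp only [hB]
    field_simp
  have hnonneg : ∀ k ∈ Ioi (0:ℝ), 0 ≤ B k := by
    intro k _; have : R ^ 2 + (2 * t) ^ 2 * k ^ 2 > 0 := by positivity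
    positivity
  have htend : Tendsto F atTop (𝓝 (Real.pi / (4 * t))) := by
    have h1 : Tendsto (fun k : ℝ => 2 * t / R * k) atTop atTop := by
      apply Tendsto.const_mul_atTop (by positivity) tendsto_id
    have h2 : Tendsto (fun k : ℝ => Real.arctan (2 * t / R * k)) atTop (𝓝 (Real.pi / 2)) :=
      (tendsto_nhds_of_tendsto_nhdsWithin Real.tendsto_arctan_atTop).comp h1
    have h3 := h2.const_mul (1 / (2 * t))
    have he : Real.pi / (4 * t) = 1 / (2 * t) * (Real.pi / 2) := by rw [div_mul_div_comm, one_mul]; ring_nf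
    rw [he]; exact h3
  have hcont : ContinuousWithinAt F (Ici 0) 0 := (hderiv 0).continuousAt.continuousWithinAt
  have hint := integrableOn_Ioi_deriv_of_nonneg hcont (fun x _ => hderiv x) hnonneg htend
  refine ⟨hint, ?_⟩
  have := integral_Ioi_of_hasDerivAt_of_nonneg hcont (fun x _ => hderiv x) hnonneg htend
  rw [this, hF]
  simp [Real.arctan_zero]

lemma b2_main (R t : ℝ) (hR : 0 < R) (ht : 1 ≤ t)
    (harctan : IntegrableOn (fun k : ℝ => R / (R ^ 2 + (2 * t) ^ 2 * k ^ 2)) (Ioi 0) ∧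
      ∫ k in Ioi (0:ℝ), R / (R ^ 2 + (2 * t) ^ 2 * k ^ 2) = Real.pi / (4 * t)) :
    ‖∫ k in Set.Ioi (0 : ℝ),
        Complex.exp (-Complex.I * (k : ℂ) ^ 2 * t - Complex.I * R * k) * (k : ℂ) *
          (Real.exp (-k ^ 2) : ℂ)‖ ≤ Real.pi / (4 * t) := by
  have ht0 : (0:ℝ) < t := lt_of_lt_of_le one_pos ht
  set ξ : ℂ := 1 + t * Complex.I with hξ
  have hξ0 : ξ ≠ 0 := by
    intro h
    have := congrArg Complex.re h
    simp [hξ] at this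
  set f : ℝ → ℂ := fun k => Complex.exp (-(ξ * k ^ 2) - Complex.I * R * k) with hf
  set d : ℝ → ℂ := fun k => 2 * ξ * k + Complex.I * R with hd
  have hdre : ∀ k : ℝ, (d k).re = 2 * k := by intro k; simp [hd, hξ]
  have hdim : ∀ k : ℝ, (d k).im = 2 * t * k + R := by intro k; simp [hd, hξ]
  have hd0 : ∀ k : ℝ, d k ≠ 0 := by
    intro k h
    have h1 : (2:ℝ) * k = 0 := by rw [← hdre k, h]; simp
    have h2 : 2 * t * k + R = 0 := by rw [← hdim k, h]; simp
    have hk : k = 0 := by linarith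
    rw [hk] at h2; simp at h2; linarith
  have hnormd : ∀ k : ℝ, 0 ≤ k → R ^ 2 + (2*t) ^ 2 * k ^ 2 ≤ ‖d k‖ ^ 2 := by
    intro k hk
    rw [Complex.sq_norm, Complex.normSq_apply, hdre, hdim]
    nlinarith [mul_nonneg (mul_nonneg ht0.le hk) hR.le, sq_nonneg k]
  have hnormf : ∀ k : ℝ, ‖f k‖ = Real.exp (-k ^ 2) := by
    intro k
    rw [hf, Complex.norm_exp]
    congr 1
    simp [hξ, ← Complex.ofReal_pow]
  -- derivative of f
  have hcoer : ∀ k : ℝ, HasDerivAt (fun x : ℝ => (x : ℂ)) 1 k := by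
    intro k; simpa using (hasDerivAt_id k).ofReal_comp
  have hderiv_f : ∀ k : ℝ, HasDerivAt f (-(d k) * f k) k := by
    intro k
    have h2 : HasDerivAt (fun x : ℝ => (x:ℂ) ^ 2) (2 * (k:ℂ)) k := by
      simpa [pow_two, two_mul] using (hcoer k).fun_mul (hcoer k)
    have h3 : HasDerivAt (fun x : ℝ => -(ξ * (x:ℂ) ^ 2) - Complex.I * R * x)
        (-(ξ * (2 * (k:ℂ))) - Complex.I * R * 1) k :=
      ((h2.const_mul ξ).neg).sub ((hcoer k).const_mul (Complex.I * R))
    have h4 := h3.cexp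
    convert h4 using 1
    simp only [hf, hd]
    ring
  -- derivative of g
  set g : ℝ → ℂ := fun k => -(1/(2*ξ)) * f k + Complex.I * R / (2*ξ) * (f k / d k) with hg
  have hderiv_g : ∀ k : ℝ,
      HasDerivAt g ((k:ℂ) * f k - Complex.I * R * (f k / (d k) ^ 2)) k := by
    intro k
    have hdd : HasDerivAt d (2*ξ) k := by
      have := ((hcoer k).const_mul (2*ξ)).add_const (Complex.I * R)
      simpa [hd] using this
    have hdiv : HasDerivAt (fun x : ℝ => f x / d x)
        ((-(d k) * f k * d k - f k * (2*ξ)) / (d k) ^ 2) k :=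
      (hderiv_f k).div hdd (hd0 k)
    have h5 := (((hderiv_f k).const_mul (-(1/(2*ξ)))).add (hdiv.const_mul (Complex.I * R / (2*ξ))))
    refine h5.congr_deriv ?_
    have hdk := hd0 k
    simp only [hd] at hdk ⊢
    field_simp
    ring
  have hcont : ContinuousWithinAt g (Ici 0) 0 := (hderiv_g 0).continuousAt.continuousWithinAt
  -- g tends to 0 at infinity
  have hexp_tend : Tendsto (fun k : ℝ => Real.exp (-k^2)) atTop (𝓝 0) := by
    have := Real.tendsto_exp_neg_atTop_nhds_zero.comp (tendsto_pow_atTop (two_ne_zero))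
    simpa [Function.comp] using this
  have htend : Tendsto g atTop (𝓝 0) := by
    apply squeeze_zero_norm'
      (a := fun k : ℝ => (‖(1:ℂ)/(2*ξ)‖ + ‖Complex.I * R / (2*ξ)‖ / R) * Real.exp (-k^2))
    · filter_upwards [eventually_ge_atTop (0:ℝ)] with k hk
      have hdlb : R ≤ ‖d k‖ := by
        calc R = |R| := (abs_of_pos hR).symm
        _ ≤ |(d k).im| := by rw [hdim]; apply abs_le_abs <;> nlinarith [mul_nonneg ht0.le hk]
        _ ≤ ‖d k‖ := Complex.abs_im_le_norm _
        _ = ‖d k‖ := rfl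
      have h1 : ‖g k‖ ≤ ‖-(1/(2*ξ)) * f k‖ + ‖Complex.I * R / (2*ξ) * (f k / d k)‖ :=
        norm_add_le _ _
      have h2 : ‖-(1/(2*ξ)) * f k‖ = ‖(1:ℂ)/(2*ξ)‖ * Real.exp (-k^2) := by
        rw [norm_mul, norm_neg, hnormf]
      have h3 : ‖Complex.I * R / (2*ξ) * (f k / d k)‖ ≤ ‖Complex.I * R / (2*ξ)‖ / R * Real.exp (-k^2) := by
        have hfd : ‖f k / d k‖ ≤ Real.exp (-k^2) / R := by
          rw [norm_div, hnormf]
          exact div_le_div₀ (Real.exp_pos _).le le_rfl hR hdlb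
        calc ‖Complex.I * R / (2*ξ) * (f k / d k)‖
            = ‖Complex.I * R / (2*ξ)‖ * ‖f k / d k‖ := norm_mul _ _
          _ ≤ ‖Complex.I * R / (2*ξ)‖ * (Real.exp (-k^2) / R) :=
              mul_le_mul_of_nonneg_left hfd (norm_nonneg _)
          _ = ‖Complex.I * R / (2*ξ)‖ / R * Real.exp (-k^2) := by ring
      calc ‖g k‖ ≤ ‖(1:ℂ)/(2*ξ)‖ * Real.exp (-k^2) + ‖Complex.I * R / (2*ξ)‖ / R * Real.exp (-k^2) := by
            rw [← h2]; exact h1.trans (by linarith)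
        _ = (‖(1:ℂ)/(2*ξ)‖ + ‖Complex.I * R / (2*ξ)‖ / R) * Real.exp (-k^2) := by ring
    · simpa using hexp_tend.const_mul (‖(1:ℂ)/(2*ξ)‖ + ‖Complex.I * R / (2*ξ)‖ / R)
  -- integrabilities
  have hexp_int : IntegrableOn (fun k : ℝ => Real.exp (-k^2)) (Ioi 0) := by
    have := (integrable_exp_neg_mul_sq (b := 1) one_pos).integrableOn (s := Ioi 0)
    simpa using this
  have hcont_f : Continuous f := by
    apply Continuous.cexp
    exact ((continuous_const.mul (Complex.continuous_ofReal.pow 2)).neg).sub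
      (continuous_const.mul Complex.continuous_ofReal)
  have hcont_d : Continuous d := by
    exact (continuous_const.mul Complex.continuous_ofReal).add continuous_const
  have h_int_kf : IntegrableOn (fun k : ℝ => (k:ℂ) * f k) (Ioi 0) := by
    have hdom : IntegrableOn (fun k : ℝ => k * Real.exp (-k^2)) (Ioi 0) := by
      have := integrableOn_rpow_mul_exp_neg_mul_sq (b := 1) one_pos (s := 1) (by norm_num)
      simpa using this
    apply Integrable.mono' hdom ((Complex.continuous_ofReal.mul hcont_f).aestronglyMeasurable)
    rw [ae_restrict_iff' measurableSet_Ioi]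
    filter_upwards with k hk
    rw [Pi.mul_apply, norm_mul, hnormf, Complex.norm_real, Real.norm_eq_abs, abs_of_pos hk]
  have h_int_fd : IntegrableOn (fun k : ℝ => f k / (d k) ^ 2) (Ioi 0) := by
    apply Integrable.mono' (hexp_int.const_mul (1/R^2))
    · exact ((hcont_f.div (hcont_d.pow 2) (fun k => pow_ne_zero 2 (hd0 k))).aestronglyMeasurable)
    · rw [ae_restrict_iff' measurableSet_Ioi]
      filter_upwards with k hk
      rw [norm_div, hnormf, norm_pow]
      have h1 : R ^ 2 ≤ ‖d k‖ ^ 2 := by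
        have := hnormd k hk.le; nlinarith [sq_nonneg (2*t*k)]
      have h2 : (0:ℝ) < R ^ 2 := by positivity
      calc Real.exp (-k^2) / ‖d k‖ ^ 2 ≤ Real.exp (-k^2) / R ^ 2 :=
            div_le_div₀ (Real.exp_pos _).le le_rfl h2 h1
        _ = 1/R^2 * Real.exp (-k^2) := by ring
  -- FTC
  have hFTC := integral_Ioi_of_hasDerivAt_of_tendsto (a := 0)
      (f' := fun k : ℝ => (k:ℂ) * f k - Complex.I * R * (f k / (d k) ^ 2))
      hcont (fun x _ => hderiv_g x)
      (h_int_kf.sub ((h_int_fd.const_mul (Complex.I * R)))) htend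
  have hg0 : g 0 = 0 := by
    have hIR : Complex.I * (R:ℂ) ≠ 0 := by
      simp [Complex.I_ne_zero, Complex.ofReal_ne_zero, hR.ne']
    have hf0 : f 0 = 1 := by simp [hf]
    have hd0' : d 0 = Complex.I * R := by simp [hd]
    simp only [hg]
    rw [hf0, hd0', mul_one]
    have he : Complex.I * ↑R / (2 * ξ) * (1 / (Complex.I * ↑R)) = 1/(2*ξ) := by
      have hR' : (R:ℂ) ≠ 0 := by exact_mod_cast hR.ne'
      field_simp
    rw [he]
    ring
  rw [hg0, sub_zero] at hFTC
  have h_int_cfd : IntegrableOn (fun k : ℝ => Complex.I * ↑R * (f k / (d k) ^ 2)) (Ioi 0) :=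
    h_int_fd.const_mul _
  have h0 : (∫ k in Ioi (0:ℝ), ((k:ℂ) * f k - Complex.I * ↑R * (f k / d k ^ 2))) = 0 := by
    simpa using hFTC
  have hsplit : ∫ k in Ioi (0:ℝ), (k:ℂ) * f k
      = Complex.I * R * ∫ k in Ioi (0:ℝ), f k / (d k)^2 := by
    have h1 := integral_sub h_int_kf h_int_cfd
    rw [h0] at h1
    have h2 := eq_of_sub_eq_zero h1.symm
    rw [h2, integral_const_mul]
  have hbound : ‖∫ k in Ioi (0:ℝ), f k / (d k)^2‖ ≤ 1/R * (Real.pi / (4*t)) := by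
    have hBint : Integrable (fun k : ℝ => 1/R * (R / (R^2 + (2*t)^2 * k^2)))
        (volume.restrict (Ioi 0)) := harctan.1.const_mul _
    refine (norm_integral_le_of_norm_le hBint ?_).trans_eq ?_
    · rw [ae_restrict_iff' measurableSet_Ioi]
      filter_upwards with k hk
      rw [norm_div, hnormf, norm_pow]
      have hpos : (0:ℝ) < R^2 + (2*t)^2 * k^2 := by positivity
      have hnd := hnormd k hk.le
      calc Real.exp (-k^2) / ‖d k‖^2 ≤ 1 / (R^2 + (2*t)^2*k^2) :=
            div_le_div₀ zero_le_one
              ((Real.exp_le_exp.2 (by nlinarith)).trans_eq Real.exp_zero) hpos hnd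
        _ = 1/R * (R / (R^2 + (2*t)^2 * k^2)) := by field_simp
    · rw [integral_const_mul, harctan.2]
  have hfinal : ‖∫ k in Ioi (0:ℝ), (k:ℂ) * f k‖ ≤ Real.pi / (4*t) := by
    rw [hsplit, norm_mul]
    have hnir : ‖Complex.I * (R:ℂ)‖ = R := by
      simp [Complex.norm_def, Complex.normSq_apply, abs_of_pos hR]
    rw [hnir]
    calc R * ‖∫ k in Ioi (0:ℝ), f k / (d k)^2‖ ≤ R * (1/R * (Real.pi/(4*t))) :=
          mul_le_mul_of_nonneg_left hbound hR.le
      _ = Real.pi/(4*t) := by field_simp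
  have hcongr : (∫ k in Ioi (0:ℝ),
      Complex.exp (-Complex.I * (k : ℂ) ^ 2 * t - Complex.I * R * k) * (k : ℂ) *
        (Real.exp (-k ^ 2) : ℂ)) = ∫ k in Ioi (0:ℝ), (k:ℂ) * f k := by
    apply integral_congr_ae
    filter_upwards with k
    simp only [hf]
    have hre : ((Real.exp (-k^2) : ℝ) : ℂ) = Complex.exp (-(k:ℂ)^2) := by
      rw [Complex.ofReal_exp]; congr 1; push_cast; ring
    rw [hre, show (-(ξ * (k:ℂ)^2) - Complex.I * R * k)
        = (-Complex.I*(k:ℂ)^2*t - Complex.I*R*k) + (-(k:ℂ)^2) by rw [hξ]; ring,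
      Complex.exp_add]
    ring
  rw [hcongr]
  exact hfinal

/-- Decay of the resonance term: there are `C₁, C₂ > 0` such that for all `R > 0` and
`t ≥ 1`, `|∫₀^∞ e^{-ik²t - iRk} k e^{-k²} dk| ≤ C₁/(R+t) + C₂/t`. -/
theorem b2_integral_decay :
    ∃ C₁ > 0, ∃ C₂ > 0, ∀ R : ℝ, 0 < R → ∀ t : ℝ, 1 ≤ t →
      ‖∫ k in Set.Ioi (0 : ℝ),
          Complex.exp (-Complex.I * (k : ℂ) ^ 2 * t - Complex.I * R * k) * (k : ℂ) *
            (Real.exp (-k ^ 2) : ℂ)‖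
        ≤ C₁ / (R + t) + C₂ / t := by
  refine ⟨1, one_pos, Real.pi, Real.pi_pos, ?_⟩
  intro R hR t ht
  have ht0 : (0:ℝ) < t := lt_of_lt_of_le one_pos ht
  have key := b2_main R t hR ht (arctan_aux R t hR ht0)
  refine key.trans ?_
  have h1 : Real.pi / (4 * t) ≤ Real.pi / t := by
    apply div_le_div_of_nonneg_left Real.pi_pos.le ht0
    linarith
  have h2 : (0:ℝ) ≤ 1 / (R + t) := by positivity
  linarith
end
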